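/- The germs of the sequences n ↦ S_1(n) = ∑_{i=1}^n 1/i and n ↦ S_2(n) = ∑_{i=1}^n 1/i² are algebraically independent over the field of rational sequences, i.e., there is no nonzero polynomial P ∈ ℚ(n)[X,Y] with P(S_1(n), S_2(n)) = 0 for all sufficiently large n. -/

import Mathlib

/-- Nested harmonic sums over ℚ. -/
def S : List ℕ → ℕ → ℚ
  | [], _ => 1
  | a :: as, n => ∑ i ∈ Finset.Icc 1 n, (1 / (i : ℚ) ^ a) * S as i

/-- Evaluation of a rational function at a natural number (value 0 at poles). -/
noncomputable def evalR (f : RatFunc ℚ) (n : ℕ) : ℚ :=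
  RatFunc.eval (RingHom.id ℚ) (n : ℚ) f

/-!
Work in the ring of germs of rational sequences at infinity with the shift `σ : n ↦ n + 1`.
Rational functions embed into it compatibly with `f(X) ↦ f(X + 1)`, and
`σ S₁ = S₁ + 1/(X+1)`, `σ S₂ = S₂ + 1/(X+1)²`. Call a ring with an endomorphism `F`
difference-simple if its only `F`-stable ideals are `⊥` and `⊤`; the kernel of an equivariant
map to a nontrivial ring is stable, so such a map is injective. If `A` is difference-simple and
`r ≠ F g - g` for all `g`, then so is `A[X]` with `X ↦ X + r`: a monic element of minimal
degree in a stable ideal is fixed, and its subleading coefficient would give such a `g`.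
Applied to `ℚ(X) ⊂ ℚ(X)[S₂] ⊂ ℚ(X)[S₂][S₁]`, everything reduces to: `q₁/(X+1) + q₂/(X+1)²`
is of the form `g(X+1) - g(X)` only if `q₁ = q₂ = 0`. Indeed the telescoped sum
`g(X+m) - g(X)` would have poles at `-1, …, -m`, more than the denominators of `g` and
`g(X+m)` allow once `m` is large.
-/

open Polynomial Filter

section DifferenceSimple

variable {A : Type*} [CommRing A]

def IsDifferenceSimple (F : A →+* A) : Prop :=
  ∀ I : Ideal A, I ≤ I.comap F → I = ⊥ ∨ I = ⊤

theorem isDifferenceSimple_of_field {K : Type*} [Field K] (F : K →+* K) :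
    IsDifferenceSimple F :=
  fun I _ => I.eq_bot_or_top

theorem IsDifferenceSimple.injective_of_comp_eq {F : A →+* A} (hF : IsDifferenceSimple F)
    {B : Type*} [CommRing B] [Nontrivial B] (φ : A →+* B) (ψ : B →+* B)
    (hφ : φ.comp F = ψ.comp φ) : Function.Injective φ := by
  refine (injective_iff_map_eq_zero φ).2 fun x hx => ?_
  have hker : RingHom.ker φ ≤ (RingHom.ker φ).comap F := fun y hy => by
    simp only [Ideal.mem_comap, RingHom.mem_ker] at hy ⊢
    rw [← RingHom.comp_apply, hφ, RingHom.comp_apply, hy, map_zero]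
  rcases hF _ hker with h | h
  · rwa [← RingHom.mem_ker, h, Ideal.mem_bot] at hx
  · have h1 : (1 : A) ∈ RingHom.ker φ := h ▸ Submodule.mem_top
    exact absurd (RingHom.mem_ker.1 h1) (by simp)

end DifferenceSimple

namespace Polynomial

variable {A : Type*} [CommRing A]

noncomputable def mapTaylor (F : A →+* A) (r : A) : A[X] →+* A[X] :=
  (taylorAlgHom r).toRingHom.comp (mapRingHom F)

variable (F : A →+* A) (r : A)

theorem mapTaylor_apply (p : A[X]) : mapTaylor F r p = taylor r (p.map F) := rfl

theorem mapTaylor_C (a : A) : mapTaylor F r (C a) = C (F a) := by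
  rw [mapTaylor_apply, map_C, taylor_C]

theorem natDegree_mapTaylor_le (p : A[X]) : (mapTaylor F r p).natDegree ≤ p.natDegree := by
  rw [mapTaylor_apply, natDegree_taylor]
  exact natDegree_map_le

theorem coeff_mapTaylor_of_natDegree_le {p : A[X]} {n : ℕ} (hp : p.natDegree ≤ n) :
    (mapTaylor F r p).coeff n = F (p.coeff n) := by
  have hdeg : (hasseDeriv n (p.map F)).natDegree = 0 := by
    have := natDegree_hasseDeriv_le (p.map F) n
    have := natDegree_map_le (f := F) (p := p)
    omega
  rw [mapTaylor_apply, taylor_coeff, eq_C_of_natDegree_eq_zero hdeg, eval_C, hasseDeriv_coeff,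
    zero_add, Nat.choose_self, Nat.cast_one, one_mul, coeff_map]

theorem coeff_mapTaylor_of_natDegree_le_succ {p : A[X]} {e : ℕ} (hp : p.natDegree ≤ e + 1) :
    (mapTaylor F r p).coeff e = F (p.coeff e) + (e + 1) * r * F (p.coeff (e + 1)) := by
  have hdeg : (hasseDeriv e (p.map F)).natDegree ≤ 1 := by
    have := natDegree_hasseDeriv_le (p.map F) e
    have := natDegree_map_le (f := F) (p := p)
    omega
  rw [mapTaylor_apply, taylor_coeff, eq_X_add_C_of_natDegree_le_one hdeg, eval_add, eval_mul,
    eval_X, eval_C, eval_C, hasseDeriv_coeff, hasseDeriv_coeff, zero_add, Nat.choose_self,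
    add_comm 1 e, Nat.choose_succ_self_right, coeff_map, coeff_map]
  push_cast
  ring

theorem eval₂RingHom_comp_mapTaylor {B : Type*} [CommRing B] (φ : A →+* B) (ψ : B →+* B)
    (hφ : φ.comp F = ψ.comp φ) {s : B} (hs : ψ s = s + φ r) :
    (eval₂RingHom φ s).comp (mapTaylor F r) = ψ.comp (eval₂RingHom φ s) := by
  refine ringHom_ext (fun a => ?_) ?_
  · simp only [RingHom.comp_apply, mapTaylor_C, coe_eval₂RingHom, eval₂_C]
    exact DFunLike.congr_fun hφ a
  · simp [mapTaylor_apply, hs]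

theorem exists_sub_eq_of_mapTaylor_eq_self [Algebra ℚ A] {p : A[X]} {e : ℕ}
    (hfix : mapTaylor F r p = p) (hp : p.natDegree ≤ e + 1) (hp1 : p.coeff (e + 1) = 1) :
    ∃ g, F g - g = r := by
  have hcoeff := congrArg (coeff · e) hfix
  simp only [coeff_mapTaylor_of_natDegree_le_succ F r hp, hp1, map_one, mul_one] at hcoeff
  have hunit : algebraMap ℚ A ((e : ℚ) + 1)⁻¹ * (e + 1) = 1 := by
    rw [← map_natCast (algebraMap ℚ A), ← map_one (algebraMap ℚ A), ← map_add, ← map_mul,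
      inv_mul_cancel₀ (by positivity)]
  refine ⟨algebraMap ℚ A (-((e : ℚ) + 1)⁻¹) * p.coeff e, ?_⟩
  rw [map_mul, RingHom.map_rat_algebraMap, map_neg]
  linear_combination (-(algebraMap ℚ A ((e : ℚ) + 1)⁻¹)) * hcoeff + r * hunit

end Polynomial

theorem Ideal.mem_leadingCoeffNth_iff_coeff {R : Type*} [Semiring R] (I : Ideal R[X]) (n : ℕ)
    (x : R) : x ∈ I.leadingCoeffNth n ↔ ∃ p ∈ I, p.natDegree ≤ n ∧ p.coeff n = x := by
  simp only [Ideal.leadingCoeffNth, Ideal.degreeLE, Submodule.mem_map, lcoeff_apply,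
    Submodule.mem_inf, mem_degreeLE, Ideal.mem_ofPolynomial, natDegree_le_iff_degree_le]
  exact ⟨fun ⟨p, ⟨h₁, h₂⟩, h₃⟩ => ⟨p, h₂, h₁, h₃⟩, fun ⟨p, h₂, h₁, h₃⟩ => ⟨p, ⟨h₁, h₂⟩, h₃⟩⟩

theorem Ideal.leadingCoeffNth_le_comap_of_le_comap_mapTaylor {A : Type*} [CommRing A]
    {F : A →+* A} {r : A} {I : Ideal A[X]} (hI : I ≤ I.comap (mapTaylor F r)) (n : ℕ) :
    I.leadingCoeffNth n ≤ (I.leadingCoeffNth n).comap F := by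
  intro x hx
  obtain ⟨p, hpI, hpn, rfl⟩ := (I.mem_leadingCoeffNth_iff_coeff n x).1 hx
  exact (I.mem_leadingCoeffNth_iff_coeff n _).2 ⟨_, hI hpI,
    (natDegree_mapTaylor_le F r p).trans hpn, coeff_mapTaylor_of_natDegree_le F r hpn⟩

theorem IsDifferenceSimple.mapTaylor {A : Type*} [CommRing A] [Algebra ℚ A] {F : A →+* A}
    (hF : IsDifferenceSimple F) {r : A} (hr : ∀ g, F g - g ≠ r) :
    IsDifferenceSimple (mapTaylor F r) := by
  classical
  intro I hI
  refine or_iff_not_imp_left.2 fun hI0 => ?_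
  obtain ⟨p₀, hp₀I, hp₀⟩ := Submodule.exists_mem_ne_zero_of_ne_bot hI0
  have hex : ∃ d, ∃ p ∈ I, p ≠ 0 ∧ p.natDegree = d := ⟨_, p₀, hp₀I, hp₀, rfl⟩
  set d := Nat.find hex
  have hmin : ∀ q ∈ I, q.natDegree ≤ d → q.coeff d = 0 → q = 0 := by
    intro q hq hdeg hcoeff
    by_contra hq0
    have hd : q.natDegree = d := le_antisymm hdeg (Nat.find_min' hex ⟨q, hq, hq0, rfl⟩)
    exact hq0 (leadingCoeff_eq_zero.1 (by rw [leadingCoeff, hd, hcoeff]))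
  have hJ0 : I.leadingCoeffNth d ≠ ⊥ := by
    obtain ⟨p, hpI, hp0, hpd⟩ : ∃ p ∈ I, p ≠ 0 ∧ p.natDegree = d := Nat.find_spec hex
    refine (Submodule.ne_bot_iff _).2
      ⟨_, (I.mem_leadingCoeffNth_iff_coeff d _).2 ⟨p, hpI, hpd.le, rfl⟩, ?_⟩
    rwa [← hpd, ← leadingCoeff, Ne, leadingCoeff_eq_zero]
  have hJ := (hF _ (Ideal.leadingCoeffNth_le_comap_of_le_comap_mapTaylor hI d)).resolve_left hJ0
  obtain ⟨p, hpI, hpd, hp1⟩ := (I.mem_leadingCoeffNth_iff_coeff d 1).1 (hJ ▸ trivial)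
  have hfix : Polynomial.mapTaylor F r p = p := by
    refine sub_eq_zero.1 (hmin _ (I.sub_mem (hI hpI) hpI) ?_ ?_)
    · exact (natDegree_sub_le _ _).trans (max_le ((natDegree_mapTaylor_le F r p).trans hpd) hpd)
    · rw [coeff_sub, coeff_mapTaylor_of_natDegree_le F r hpd, hp1, map_one, sub_self]
  rcases Nat.eq_zero_or_pos d with hd | hd
  · rw [hd] at hpd hp1
    rw [eq_C_of_natDegree_eq_zero (Nat.le_zero.1 hpd), hp1, C_1] at hpI
    exact (Ideal.eq_top_iff_one I).2 hpI
  · obtain ⟨e, he⟩ : ∃ e, d = e + 1 := ⟨d - 1, by omega⟩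
    rw [he] at hpd hp1
    obtain ⟨g, hg⟩ := exists_sub_eq_of_mapTaylor_eq_self F r hfix hpd hp1
    exact absurd hg (hr g)

section RationalFunctions

variable {K : Type*} [Field K]

noncomputable def ratShift (c : K) : RatFunc K →+* RatFunc K :=
  RatFunc.mapRingHom (taylorAlgHom c)
    (nonZeroDivisors_le_comap_nonZeroDivisors_of_injective _ (taylor_injective c))

theorem ratShift_div (c : K) (p q : K[X]) :
    ratShift c (algebraMap _ _ p / algebraMap _ _ q) =
      algebraMap _ _ (taylor c p) / algebraMap _ _ (taylor c q) := by
  rw [ratShift, RatFunc.coe_mapRingHom_eq_coe_map, RatFunc.map_apply_div]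
  rfl

theorem ratShift_algebraMap (c : K) (p : K[X]) :
    ratShift c (algebraMap _ _ p) = algebraMap _ _ (taylor c p) := by
  simpa using ratShift_div c p 1

theorem ratShift_C (c a : K) : ratShift c (RatFunc.C a) = RatFunc.C a := by
  rw [← RatFunc.algebraMap_C, ratShift_algebraMap, taylor_C]

theorem ratShift_ratShift (c d : K) (f : RatFunc K) :
    ratShift c (ratShift d f) = ratShift (c + d) f := by
  rw [← RatFunc.num_div_denom f, ratShift_div, ratShift_div, ratShift_div, taylor_taylor,
    taylor_taylor]

theorem ratShift_zero (f : RatFunc K) : ratShift 0 f = f := by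
  rw [← RatFunc.num_div_denom f, ratShift_div]
  simp

theorem ratShift_natCast_sub_self {g h : RatFunc K} (hg : ratShift 1 g - g = h) (m : ℕ) :
    ratShift (m : K) g - g = ∑ j ∈ Finset.range m, ratShift (j : K) h := by
  have htel := Finset.sum_range_sub (fun j : ℕ => ratShift (j : K) g) m
  simp only [Nat.cast_zero, ratShift_zero] at htel
  rw [← htel]
  refine Finset.sum_congr rfl fun j _ => ?_
  rw [← hg, map_sub, ratShift_ratShift, Nat.cast_succ]

def regularAt (x : K) : Subring (RatFunc K) where
  carrier := {f | ∃ p q : K[X], q.eval x ≠ 0 ∧ f = algebraMap _ _ p / algebraMap _ _ q}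
  one_mem' := ⟨1, 1, by simp, by simp⟩
  zero_mem' := ⟨0, 1, by simp, by simp⟩
  mul_mem' := by
    rintro _ _ ⟨p, q, hq, rfl⟩ ⟨p', q', hq', rfl⟩
    exact ⟨p * p', q * q', by simp [hq, hq'], by rw [map_mul, map_mul, div_mul_div_comm]⟩
  add_mem' := by
    rintro _ _ ⟨p, q, hq, rfl⟩ ⟨p', q', hq', rfl⟩
    have h₁ : algebraMap K[X] (RatFunc K) q ≠ 0 :=
      RatFunc.algebraMap_ne_zero fun h => hq (by simp [h])
    have h₂ : algebraMap K[X] (RatFunc K) q' ≠ 0 :=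
      RatFunc.algebraMap_ne_zero fun h => hq' (by simp [h])
    exact ⟨p * q' + q * p', q * q', by simp [hq, hq'], by
      rw [div_add_div _ _ h₁ h₂]; simp⟩
  neg_mem' := by
    rintro _ ⟨p, q, hq, rfl⟩
    exact ⟨-p, q, hq, by rw [map_neg, neg_div]⟩

theorem div_mem_regularAt {x : K} (p : K[X]) {q : K[X]} (hq : q.eval x ≠ 0) :
    algebraMap _ _ p / algebraMap _ _ q ∈ regularAt x :=
  ⟨p, q, hq, rfl⟩

noncomputable def simplePole (a : K) : RatFunc K := (algebraMap K[X] (RatFunc K) (X - C a))⁻¹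

theorem ratShift_simplePole (c a : K) : ratShift c (simplePole a) = simplePole (a - c) := by
  rw [simplePole, simplePole, map_inv₀, ratShift_algebraMap, map_sub, taylor_X, taylor_C, C_sub]
  ring_nf

theorem simplePole_mem_regularAt {a x : K} (hx : x ≠ a) : simplePole a ∈ regularAt x := by
  simpa only [simplePole, map_one, one_div] using
    div_mem_regularAt (x := x) 1 (q := X - C a) (by simpa [sub_eq_zero])

theorem C_mem_regularAt (x a : K) : RatFunc.C a ∈ regularAt x := by
  simpa using div_mem_regularAt (x := x) (C a) (q := 1) (by simp)

theorem eq_zero_of_mem_regularAt {a q₁ q₂ : K}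
    (h : RatFunc.C q₁ * simplePole a + RatFunc.C q₂ * simplePole a ^ 2 ∈ regularAt a) :
    q₁ = 0 ∧ q₂ = 0 := by
  obtain ⟨p, q, hq, hpq⟩ := h
  have hq0 : algebraMap K[X] (RatFunc K) q ≠ 0 :=
    RatFunc.algebraMap_ne_zero fun h => hq (by simp [h])
  have hX : algebraMap K[X] (RatFunc K) (X - C a) ≠ 0 :=
    RatFunc.algebraMap_ne_zero (X_sub_C_ne_zero a)
  have hpoly : (C q₁ * (X - C a) + C q₂) * q = p * (X - C a) ^ 2 := by
    apply IsFractionRing.injective K[X] (RatFunc K)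
    rw [simplePole, ← RatFunc.algebraMap_C, ← RatFunc.algebraMap_C] at hpq
    simp only [map_mul, map_add, map_pow]
    field_simp at hpq
    linear_combination hpq
  have hq₂ : q₂ = 0 := by
    simpa [hq] using congrArg (eval a) hpoly
  rw [hq₂, C_0, add_zero, mul_right_comm, sq, ← mul_assoc] at hpoly
  have hq₁ := congrArg (eval a) (mul_right_cancel₀ (X_sub_C_ne_zero a) hpoly)
  simp only [eval_mul, eval_C, eval_sub, eval_X, sub_self, mul_zero, mul_eq_zero, hq,
    or_false] at hq₁
  exact ⟨hq₁, hq₂⟩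

theorem exists_le_natDegree_eval_sub_ne_zero {R : Type*} [CommRing R] [IsDomain R]
    [CharZero R] {w : R[X]} (hw : w ≠ 0) (a : R) : ∃ j ≤ w.natDegree, w.eval (a - j) ≠ 0 := by
  by_contra! h
  refine hw (eq_zero_of_natDegree_lt_card_of_eval_eq_zero _
    (f := fun i : Fin (w.natDegree + 1) => a - (i : R)) (fun i i' hii' => ?_)
    (fun i => h i (Nat.lt_succ_iff.1 i.2)) (by simp))
  simpa [Fin.val_inj] using hii'

theorem eq_zero_of_ratShift_sub_self_eq [CharZero K] {g : RatFunc K} {q₁ q₂ : K}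
    (hg : ratShift 1 g - g =
      RatFunc.C q₁ * simplePole (-1) + RatFunc.C q₂ * simplePole (-1) ^ 2) :
    q₁ = 0 ∧ q₂ = 0 := by
  set m := 2 * g.denom.natDegree + 1
  have hw : g.denom * taylor (m : K) g.denom ≠ 0 :=
    mul_ne_zero g.denom_ne_zero ((taylor_eq_zero _ _).not.2 g.denom_ne_zero)
  obtain ⟨j, hjm, hj⟩ := exists_le_natDegree_eval_sub_ne_zero hw (-1)
  rw [natDegree_mul g.denom_ne_zero ((taylor_eq_zero _ _).not.2 g.denom_ne_zero),
    natDegree_taylor, ← two_mul, ← Nat.lt_succ_iff] at hjm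
  rw [eval_mul, taylor_eval] at hj
  have hg_reg : g ∈ regularAt (-1 - (j : K)) := by
    rw [← RatFunc.num_div_denom g]
    exact div_mem_regularAt _ (left_ne_zero_of_mul hj)
  have hshift_reg : ratShift (m : K) g ∈ regularAt (-1 - (j : K)) := by
    rw [← RatFunc.num_div_denom g, ratShift_div]
    exact div_mem_regularAt _ (by rw [taylor_eval]; exact right_ne_zero_of_mul hj)
  -- `g` and `g(X + m)` are regular at `-1 - j`, but only the `j`-th term of the sum is not.
  have hsum := ratShift_natCast_sub_self hg m
  simp only [map_add, map_mul, ratShift_C, map_pow, ratShift_simplePole] at hsum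
  apply eq_zero_of_mem_regularAt (a := -1 - (j : K))
  rw [← Finset.add_sum_erase _ _ (Finset.mem_range.2 hjm), eq_comm, ← eq_sub_iff_add_eq] at hsum
  rw [hsum]
  refine sub_mem (sub_mem hshift_reg hg_reg) (Subring.sum_mem _ fun i hi => ?_)
  have hij : -1 - (j : K) ≠ -1 - i := by
    simpa [eq_comm] using Finset.ne_of_mem_erase hi
  exact add_mem (mul_mem (C_mem_regularAt _ _) (simplePole_mem_regularAt hij))
    (mul_mem (C_mem_regularAt _ _) (pow_mem (simplePole_mem_regularAt hij) _))

theorem ratShift_sub_self_ne_simplePole_sq [CharZero K] (g : RatFunc K) :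
    ratShift 1 g - g ≠ simplePole (-1) ^ 2 := fun h =>
  one_ne_zero (eq_zero_of_ratShift_sub_self_eq (q₁ := (0 : K)) (q₂ := 1) (by simpa using h)).2

end RationalFunctions

section Germs

abbrev SeqGerm : Type := (atTop : Filter ℕ).Germ ℚ

def germShift : SeqGerm →+* SeqGerm where
  toFun g := g.compTendsto (· + 1) (tendsto_add_atTop_nat 1)
  map_one' := rfl
  map_mul' a b := by
    induction a using Germ.inductionOn
    induction b using Germ.inductionOn
    rfl
  map_zero' := rfl
  map_add' a b := by
    induction a using Germ.inductionOn
    induction b using Germ.inductionOn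
    rfl

theorem germShift_coe (u : ℕ → ℚ) :
    germShift u = ((fun n => u (n + 1) : ℕ → ℚ) : SeqGerm) :=
  rfl

theorem eventually_eval_natCast_ne_zero {R : Type*} [CommRing R] [IsDomain R] [CharZero R]
    {p : R[X]} (hp : p ≠ 0) : ∀ᶠ n : ℕ in atTop, p.eval (n : R) ≠ 0 := by
  rw [← Nat.cofinite_eq_atTop]
  exact ((finite_setOfPred_isRoot hp).preimage Nat.cast_injective.injOn).eventually_cofinite_notMem

noncomputable def evalGerm : RatFunc ℚ →+* SeqGerm where
  toFun f := (evalR f : ℕ → ℚ)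
  map_one' := by
    rw [← Germ.coe_one]
    exact congrArg _ (_root_.funext fun n => RatFunc.eval_one _ _)
  map_zero' := by
    rw [← Germ.coe_zero]
    exact congrArg _ (_root_.funext fun n => RatFunc.eval_zero _ _)
  map_mul' f g := by
    rw [← Germ.coe_mul, Germ.coe_eq]
    filter_upwards [eventually_eval_natCast_ne_zero f.denom_ne_zero,
      eventually_eval_natCast_ne_zero g.denom_ne_zero] with n hf hg
    exact RatFunc.eval_mul _ _ hf hg
  map_add' f g := by
    rw [← Germ.coe_add, Germ.coe_eq]
    filter_upwards [eventually_eval_natCast_ne_zero f.denom_ne_zero,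
      eventually_eval_natCast_ne_zero g.denom_ne_zero] with n hf hg
    exact RatFunc.eval_add _ _ hf hg

theorem evalGerm_apply (f : RatFunc ℚ) : evalGerm f = (evalR f : ℕ → ℚ) := rfl

theorem evalGerm_injective : Function.Injective evalGerm := evalGerm.injective

theorem evalGerm_algebraMap (p : ℚ[X]) :
    evalGerm (algebraMap _ _ p) = ((fun n : ℕ => p.eval (n : ℚ)) : ℕ → ℚ) :=
  congrArg _ (_root_.funext fun n => by simp [evalR])

theorem evalGerm_inv {p : ℚ[X]} (hp : p ≠ 0) :
    evalGerm (algebraMap _ _ p)⁻¹ = ((fun n : ℕ => (p.eval (n : ℚ))⁻¹) : ℕ → ℚ) := by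
  have h := congrArg evalGerm (inv_mul_cancel₀ (RatFunc.algebraMap_ne_zero hp))
  rw [map_mul, map_one, evalGerm_algebraMap, evalGerm_apply, ← Germ.coe_mul, ← Germ.coe_one,
    Germ.coe_eq] at h
  rw [evalGerm_apply, Germ.coe_eq]
  filter_upwards [h, eventually_eval_natCast_ne_zero hp] with n hn hpn
  exact eq_inv_of_mul_eq_one_left hn

theorem germShift_evalGerm (f : RatFunc ℚ) :
    germShift (evalGerm f) = evalGerm (ratShift 1 f) := by
  have : germShift.comp evalGerm = evalGerm.comp (ratShift 1) := by
    refine IsLocalization.ringHom_ext (nonZeroDivisors ℚ[X]) (RingHom.ext fun p => ?_)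
    simp only [RingHom.comp_apply, ratShift_algebraMap, evalGerm_algebraMap, germShift_coe,
      taylor_eval, Nat.cast_succ]
  exact DFunLike.congr_fun this f

theorem exists_eq_C_of_ratShift_eq {f : RatFunc ℚ} (hf : ratShift 1 f = f) :
    ∃ c : ℚ, f = RatFunc.C c := by
  have h : germShift (evalGerm f) = evalGerm f := by rw [germShift_evalGerm, hf]
  rw [evalGerm_apply, germShift_coe, Germ.coe_eq, EventuallyEq, eventually_atTop] at h
  obtain ⟨N, hN⟩ := h
  have hconst : ∀ n ≥ N, evalR f n = evalR f N := by
    intro n hn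
    induction n, hn using Nat.le_induction with
    | base => rfl
    | succ n hn ih => rw [← ih, ← hN n hn]
  refine ⟨evalR f N, evalGerm_injective ?_⟩
  rw [evalGerm_apply, ← RatFunc.algebraMap_C, evalGerm_algebraMap, Germ.coe_eq, EventuallyEq,
    eventually_atTop]
  exact ⟨N, fun n hn => by simpa using hconst n hn⟩

theorem S_singleton_succ (a n : ℕ) : S [a] (n + 1) = S [a] n + ((n : ℚ) + 1)⁻¹ ^ a := by
  simp only [S, Finset.sum_Icc_succ_top (Nat.le_add_left 1 n), mul_one, one_div, inv_pow]
  push_cast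
  ring

theorem germShift_S_singleton (a : ℕ) :
    germShift (S [a] : ℕ → ℚ) = (S [a] : ℕ → ℚ) + evalGerm (simplePole (-1) ^ a) := by
  rw [map_pow, simplePole, evalGerm_inv (X_sub_C_ne_zero _), germShift_coe, ← Germ.coe_pow,
    ← Germ.coe_add]
  congr 1
  ext n
  simp [S_singleton_succ]

end Germs

theorem mapTaylor_sub_self_ne_C_simplePole (c : (RatFunc ℚ)[X]) :
    mapTaylor (ratShift 1) (simplePole (-1) ^ 2) c - c ≠ C (simplePole (-1)) := by
  intro hc
  rcases Nat.eq_zero_or_pos c.natDegree with h0 | hpos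
  · rw [eq_C_of_natDegree_eq_zero h0, mapTaylor_C, ← C_sub, C_inj] at hc
    exact one_ne_zero
      (eq_zero_of_ratShift_sub_self_eq (q₁ := (1 : ℚ)) (q₂ := 0) (by simpa using hc)).1
  obtain ⟨e, he⟩ : ∃ e, c.natDegree = e + 1 := ⟨_, (Nat.succ_pred_eq_of_pos hpos).symm⟩
  -- The leading coefficient is shift-invariant, hence a constant `q ≠ 0`; then the next
  -- coefficient solves a difference equation whose `1/(X+1)²`-part has weight `-(e + 1) q`.
  have htop := congrArg (coeff · (e + 1)) hc
  simp only [coeff_sub, coeff_mapTaylor_of_natDegree_le _ _ he.le, coeff_C,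
    if_neg e.succ_ne_zero, sub_eq_zero] at htop
  obtain ⟨q, hq⟩ := exists_eq_C_of_ratShift_eq htop
  have hq0 : q ≠ 0 := by
    rintro rfl
    refine leadingCoeff_ne_zero.2 (ne_zero_of_natDegree_gt hpos) ?_
    rw [leadingCoeff, he, hq, map_zero]
  have hnext := congrArg (coeff · e) hc
  simp only [coeff_sub, coeff_mapTaylor_of_natDegree_le_succ _ _ he.le, hq, ratShift_C,
    coeff_C] at hnext
  refine hq0 ((mul_eq_zero.1 (eq_zero_of_ratShift_sub_self_eq (g := c.coeff e)
    (q₁ := if e = 0 then 1 else 0) (q₂ := -((e : ℚ) + 1) * q) ?_).2).resolve_left ?_)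
  · split_ifs at hnext ⊢ <;>
      simp only [map_one, map_zero, one_mul, zero_mul, map_neg, map_mul, map_add, map_natCast] <;>
      linear_combination hnext
  · exact neg_ne_zero.2 (by positivity)

noncomputable def harmonicEval : (RatFunc ℚ)[X][X] →+* SeqGerm :=
  eval₂RingHom (eval₂RingHom evalGerm (S [2] : ℕ → ℚ)) (S [1] : ℕ → ℚ)

theorem harmonicEval_injective : Function.Injective harmonicEval := by
  have hinner := (isDifferenceSimple_of_field (ratShift (1 : ℚ))).mapTaylor
    ratShift_sub_self_ne_simplePole_sq
  have houter := hinner.mapTaylor mapTaylor_sub_self_ne_C_simplePole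
  refine houter.injective_of_comp_eq _ germShift ?_
  refine eval₂RingHom_comp_mapTaylor _ _ _ _ ?_ ?_
  · refine eval₂RingHom_comp_mapTaylor _ _ _ _ ?_ (germShift_S_singleton 2)
    exact RingHom.ext fun f => (germShift_evalGerm f).symm
  · simpa using germShift_S_singleton 1

noncomputable def toIterated {R : Type*} [CommRing R] : MvPolynomial (Fin 2) R →+* R[X][X] :=
  MvPolynomial.eval₂Hom (C.comp C) ![X, C X]

theorem toIterated_injective {R : Type*} [CommRing R] :
    Function.Injective (toIterated (R := R)) := by
  let back : R[X][X] →+* MvPolynomial (Fin 2) R :=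
    eval₂RingHom (eval₂RingHom MvPolynomial.C (MvPolynomial.X 1)) (MvPolynomial.X 0)
  have hback : back.comp toIterated = RingHom.id _ := by
    refine MvPolynomial.ringHom_ext (fun r => ?_) fun i => ?_
    · simp [back, toIterated]
    · fin_cases i <;> simp [back, toIterated]
  exact Function.LeftInverse.injective (DFunLike.congr_fun hback)

theorem eval₂Hom_S_injective : Function.Injective
    (MvPolynomial.eval₂Hom evalGerm ![(S [1] : ℕ → ℚ), (S [2] : ℕ → ℚ)]) := by
  have h : MvPolynomial.eval₂Hom evalGerm ![(S [1] : ℕ → ℚ), (S [2] : ℕ → ℚ)] =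
      harmonicEval.comp toIterated := by
    refine MvPolynomial.ringHom_ext (fun r => ?_) fun i => ?_
    · simp [harmonicEval, toIterated]
    · fin_cases i <;> simp [harmonicEval, toIterated]
  rw [h]
  exact harmonicEval_injective.comp toIterated_injective

theorem eval₂Hom_S_apply (P : MvPolynomial (Fin 2) (RatFunc ℚ)) :
    MvPolynomial.eval₂Hom evalGerm ![(S [1] : ℕ → ℚ), (S [2] : ℕ → ℚ)] P =
      ((fun n => ∑ m ∈ P.support,
        evalR (MvPolynomial.coeff m P) n * (S [1] n) ^ (m 0) * (S [2] n) ^ (m 1) : ℕ → ℚ) :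
          SeqGerm) := by
  rw [MvPolynomial.coe_eval₂Hom, MvPolynomial.eval₂_eq']
  simp only [Fin.prod_univ_two, Matrix.cons_val_zero, Matrix.cons_val_one, evalGerm_apply]
  have hcoe : ∀ u : ℕ → ℚ, (u : SeqGerm) = Germ.coeRingHom atTop u := fun _ => rfl
  simp only [hcoe, ← map_pow, ← map_mul, ← map_sum]
  congr 1
  ext n
  simp [Finset.sum_apply, mul_assoc]

/-- The sequences `S₁(n) = ∑_{i=1}^n 1/i` and `S₂(n) = ∑_{i=1}^n 1/i²` are
algebraically independent over the field of rational sequences: there is no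
nonzero `P ∈ ℚ(n)[X,Y]` with `P(S₁(n), S₂(n)) = 0` for all sufficiently large `n`. -/
theorem S1_S2_algebraically_independent :
    ¬ ∃ P : MvPolynomial (Fin 2) (RatFunc ℚ), P ≠ 0 ∧
      ∃ N : ℕ, ∀ n ≥ N,
        (∑ m ∈ P.support,
          evalR (MvPolynomial.coeff m P) n * (S [1] n) ^ (m 0) * (S [2] n) ^ (m 1)) = 0 := by
  rintro ⟨P, hP, N, hN⟩
  refine hP (eval₂Hom_S_injective ?_)
  rw [eval₂Hom_S_apply, map_zero, ← Germ.coe_zero, Germ.coe_eq]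
  exact eventually_atTop.2 ⟨N, hN⟩
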